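/- arXiv:1602.05842 — 3 statements merged into one kernel-verified Lean document; each statement's English description precedes it below -/
import Mathlib

section
/- Let G be a group in which every element is a product of commutators. For g∈G let CL(g) be the least integer k≥0 such that g is a product of k commutators, and set d_CL(g,h)=CL(gh⁻¹). Then d_CL is a bi-invariant metric on G, and for every non-principal ultrafilter U on ℕ the asymptotic cone Cone_U(G,d_CL) is an abelian group. -/
open Filter Topology

/-- `g` is a product of `k` commutators. -/
def IsProdOfCommutators {G : Type*} [Group G] (g : G) (k : ℕ) : Prop :=
  ∃ ψ η : Fin k → G,
    g = (List.ofFn (fun j => ψ j * η j * (ψ j)⁻¹ * (η j)⁻¹)).prod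

/-- The commutator length: the least `k ≥ 0` such that `g` is a product of `k` commutators. -/
noncomputable def commLength {G : Type*} [Group G] (g : G) : ℕ :=
  sInf {k : ℕ | IsProdOfCommutators g k}

/-- The commutator metric `d_CL(g,h) = CL(g h⁻¹)`, viewed as a real-valued function. -/
noncomputable def dCL {G : Type*} [Group G] (g h : G) : ℝ :=
  (commLength (g * h⁻¹) : ℝ)

/-- A sequence in `G` is admissible for the asymptotic cone (based at the identity)
if `d(1, g j)/j` is bounded. -/
def ConeBdd {G : Type*} [Group G] (d : G → G → ℝ) (g : ℕ → G) : Prop :=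
  ∃ C : ℝ, ∀ j : ℕ, d 1 (g j) / (j : ℝ) ≤ C

/-- The defining equivalence relation of the asymptotic cone:
`g ~ h` iff `lim_U d(g j, h j)/j = 0`. -/
def ConeRel {G : Type*} [Group G] (d : G → G → ℝ) (U : Ultrafilter ℕ) (g h : ℕ → G) : Prop :=
  Tendsto (fun j : ℕ => d (g j) (h j) / (j : ℝ)) (U : Filter ℕ) (𝓝 0)

section Aux

variable {G : Type*} [Group G]

lemma isProdOfCommutators_iff_list (g : G) (k : ℕ) :
    IsProdOfCommutators g k ↔
      ∃ l : List G, l.length = k ∧ (∀ x ∈ l, ∃ ψ η : G, x = ψ * η * ψ⁻¹ * η⁻¹) ∧ g = l.prod := by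
  constructor
  · rintro ⟨ψ, η, rfl⟩
    refine ⟨_, List.length_ofFn, ?_, rfl⟩
    intro x hx
    rw [List.mem_ofFn] at hx
    obtain ⟨j, rfl⟩ := hx
    exact ⟨ψ j, η j, rfl⟩
  · rintro ⟨l, rfl, hc, rfl⟩
    choose ψ η hψη using fun j : Fin l.length => hc (l.get j) (l.get_mem _)
    refine ⟨ψ, η, ?_⟩
    have : (List.ofFn fun j => ψ j * η j * (ψ j)⁻¹ * (η j)⁻¹) = List.ofFn l.get := by
      congr 1
      funext j
      exact (hψη j).symm
    rw [this, List.ofFn_get]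

lemma isProd_one : IsProdOfCommutators (1 : G) 0 := by
  rw [isProdOfCommutators_iff_list]
  exact ⟨[], rfl, by simp, rfl⟩

lemma isProd_mul {g h : G} {k l : ℕ} (hg : IsProdOfCommutators g k)
    (hh : IsProdOfCommutators h l) : IsProdOfCommutators (g * h) (k + l) := by
  rw [isProdOfCommutators_iff_list] at *
  obtain ⟨L1, rfl, hc1, rfl⟩ := hg
  obtain ⟨L2, rfl, hc2, rfl⟩ := hh
  refine ⟨L1 ++ L2, by simp, ?_, (List.prod_append).symm⟩
  intro x hx
  rcases List.mem_append.mp hx with h | h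
  · exact hc1 x h
  · exact hc2 x h

lemma isProd_inv {g : G} {k : ℕ} (hg : IsProdOfCommutators g k) :
    IsProdOfCommutators g⁻¹ k := by
  rw [isProdOfCommutators_iff_list] at *
  obtain ⟨l, rfl, hc, rfl⟩ := hg
  refine ⟨(l.map fun x => x⁻¹).reverse, by simp, ?_, List.prod_inv_reverse l⟩
  intro x hx
  rw [List.mem_reverse, List.mem_map] at hx
  obtain ⟨y, hy, rfl⟩ := hx
  obtain ⟨ψ, η, rfl⟩ := hc y hy
  exact ⟨η, ψ, by group⟩

lemma isProd_conj {g : G} {k : ℕ} (a : G) (hg : IsProdOfCommutators g k) :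
    IsProdOfCommutators (a * g * a⁻¹) k := by
  rw [isProdOfCommutators_iff_list] at *
  obtain ⟨l, rfl, hc, rfl⟩ := hg
  refine ⟨l.map fun x => a * x * a⁻¹, by simp, ?_, ?_⟩
  · intro x hx
    rw [List.mem_map] at hx
    obtain ⟨y, hy, rfl⟩ := hx
    obtain ⟨ψ, η, rfl⟩ := hc y hy
    exact ⟨a * ψ * a⁻¹, a * η * a⁻¹, by group⟩
  · simpa [MulAut.conj] using map_list_prod ((MulAut.conj a).toMonoidHom) l

variable (hG : ∀ g : G, ∃ k : ℕ, IsProdOfCommutators g k)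
include hG

lemma commLength_spec (g : G) : IsProdOfCommutators g (commLength g) :=
  Nat.sInf_mem (hG g)

omit hG in
lemma commLength_le {g : G} {k : ℕ} (h : IsProdOfCommutators g k) : commLength g ≤ k :=
  Nat.sInf_le h

omit hG in
lemma commLength_one : commLength (1 : G) = 0 :=
  Nat.le_zero.mp (commLength_le isProd_one)

lemma commLength_eq_zero {g : G} (h : commLength g = 0) : g = 1 := by
  have := commLength_spec hG g
  rw [h, isProdOfCommutators_iff_list] at this
  obtain ⟨l, hl, -, rfl⟩ := this
  rw [List.length_eq_zero_iff] at hl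
  simp [hl]

lemma commLength_mul_le (g h : G) :
    commLength (g * h) ≤ commLength g + commLength h :=
  commLength_le (isProd_mul (commLength_spec hG g) (commLength_spec hG h))

lemma commLength_inv (g : G) : commLength g⁻¹ = commLength g := by
  refine le_antisymm (commLength_le (isProd_inv (commLength_spec hG g))) ?_
  have := commLength_le (isProd_inv (commLength_spec hG g⁻¹))
  simpa using this

lemma commLength_conj (a g : G) : commLength (a * g * a⁻¹) = commLength g := by
  refine le_antisymm (commLength_le (isProd_conj a (commLength_spec hG g))) ?_
  have := commLength_le (isProd_conj a⁻¹ (commLength_spec hG (a * g * a⁻¹)))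
  simpa [mul_assoc] using this

end Aux

/-- Let `G` be a group in which every element is a product of commutators. Then
`d_CL(g,h) = CL(g h⁻¹)` is a bi-invariant metric on `G`, and for every non-principal
ultrafilter `U` on `ℕ` the asymptotic cone `Cone_U(G, d_CL)` is an abelian group
(coordinatewise multiplication is commutative up to the cone equivalence relation). -/
theorem stmt1 {G : Type*} [Group G]
    (hG : ∀ g : G, ∃ k : ℕ, IsProdOfCommutators g k)
    (U : Ultrafilter ℕ) (hU : ∀ n : ℕ, U ≠ pure n) :
    -- `d_CL` is a bi-invariant metric
    (∀ g h : G, 0 ≤ dCL g h) ∧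
    (∀ g h : G, dCL g h = 0 ↔ g = h) ∧
    (∀ g h : G, dCL g h = dCL h g) ∧
    (∀ g h k : G, dCL g k ≤ dCL g h + dCL h k) ∧
    (∀ g g' h : G, dCL (g * h) (g' * h) = dCL g g') ∧
    (∀ g g' h : G, dCL (h * g) (h * g') = dCL g g') ∧
    -- the asymptotic cone of `(G, d_CL)` is abelian
    (∀ g h : ℕ → G, ConeBdd dCL g → ConeBdd dCL h →
      ConeRel dCL U (g * h) (h * g)) := by
  refine ⟨fun g h => Nat.cast_nonneg _, ?_, ?_, ?_, ?_, ?_, ?_⟩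
  · intro g h
    rw [dCL, Nat.cast_eq_zero]
    constructor
    · intro h0
      have := commLength_eq_zero hG h0
      exact mul_inv_eq_one.mp this
    · rintro rfl
      simpa using commLength_one (G := G)
  · intro g h
    rw [dCL, dCL]
    have : h * g⁻¹ = (g * h⁻¹)⁻¹ := by group
    rw [this, commLength_inv hG]
  · intro g h k
    rw [dCL, dCL, dCL, ← Nat.cast_add, Nat.cast_le]
    have : g * k⁻¹ = (g * h⁻¹) * (h * k⁻¹) := by group
    rw [this]
    exact commLength_mul_le hG _ _
  · intro g g' h
    rw [dCL, dCL]
    congr 1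
    group
  · intro g g' h
    rw [dCL, dCL]
    have : h * g * (h * g')⁻¹ = h * (g * g'⁻¹) * h⁻¹ := by group
    rw [this, commLength_conj hG]
  · intro g h _ _
    have key : ∀ j : ℕ, dCL ((g * h) j) ((h * g) j) ≤ 1 := by
      intro j
      have h1 : IsProdOfCommutators ((g * h) j * ((h * g) j)⁻¹) 1 := by
        refine ⟨fun _ => g j, fun _ => h j, ?_⟩
        simp [Pi.mul_apply]
        group
      have := commLength_le h1
      rw [dCL]
      exact_mod_cast this
    have hle : (U : Filter ℕ) ≤ atTop := by
      rcases U.le_cofinite_or_eq_pure with h | ⟨a, ha⟩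
      · rwa [Nat.cofinite_eq_atTop] at h
      · exact absurd ha (hU a)
    refine squeeze_zero (fun j => div_nonneg (by rw [dCL]; positivity) (Nat.cast_nonneg j))
      (fun j => ?_) ((tendsto_one_div_atTop_nhds_zero_nat).mono_left hle)
    rcases Nat.eq_zero_or_pos j with rfl | hj
    · simp [dCL]
    · have hj' : (0:ℝ) < j := by exact_mod_cast hj
      exact (div_le_div_iff_of_pos_right hj').mpr (key j)
end

section
/- Fix r ≥ 1 and nonzero real numbers α_1,...,α_r, β_1,...,β_r. For k ∈ ℕ define the 2×2 real matrices A_j(k) = [[1+k²α_jβ_j, kβ_j],[kα_j, 1]], and for 1 ≤ i ≤ j ≤ r set Ā_{i,j}(k) = A_j(k)·A_{j−1}(k)···A_i(k) and γ_{i,j} = ∏_{l=i}^{j} α_lβ_l. Then for every 1 ≤ i < j ≤ r, as k → ∞: the (1,1)-entry of Ā_{i,j}(k) equals k^{2(j−i+1)}γ_{i,j}·(1+O(1/k)), the (1,2)-entry equals k^{2(j−i)+1}(γ_{i,j}/α_i)·(1+O(1/k)), the (2,1)-entry equals k^{2(j−i)+1}(γ_{i,j}/β_j)·(1+O(1/k)),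 and the (2,2)-entry equals k^{2(j−i)}(γ_{i,j}/(α_iβ_j))·(1+O(1/k)). -/
/-- The matrix `A_j(k) = [[1 + k²α_jβ_j, kβ_j],[kα_j, 1]]`. -/
noncomputable def eggA (α β : ℕ → ℝ) (k j : ℕ) : Matrix (Fin 2) (Fin 2) ℝ :=
  !![1 + (k : ℝ) ^ 2 * α j * β j, (k : ℝ) * β j;
     (k : ℝ) * α j, 1]

/-- The descending product `Ā_{i,j}(k) = A_j(k)·A_{j-1}(k)⋯A_i(k)` (factors with index
`< i` are omitted); `eggProd α β k i j` is this product. -/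
noncomputable def eggProd (α β : ℕ → ℝ) (k i : ℕ) : ℕ → Matrix (Fin 2) (Fin 2) ℝ
  | 0 => 1
  | j + 1 => (if i ≤ j + 1 then eggA α β k (j + 1) else 1) * eggProd α β k i j

open Polynomial Filter

lemma eggProd_of_lt (α β : ℕ → ℝ) (k i : ℕ) : ∀ m, m < i → eggProd α β k i m = 1
  | 0, _ => rfl
  | m + 1, h => by
      rw [eggProd, if_neg (by omega), eggProd_of_lt α β k i m (by omega), one_mul]

lemma eggProd_succ (α β : ℕ → ℝ) (k i j : ℕ) (h : i ≤ j + 1) :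
    eggProd α β k i (j + 1) = eggA α β k (j + 1) * eggProd α β k i j := by
  rw [eggProd, if_pos h]

lemma deg_term {c : ℝ} {m n N : ℕ} {p : ℝ[X]} (hp : p.degree < (n : WithBot ℕ))
    (h : m + n ≤ N) : (C c * X ^ m * p).degree < (N : WithBot ℕ) := by
  calc (C c * X ^ m * p).degree ≤ (C c * X ^ m).degree + p.degree := degree_mul_le _ _
    _ ≤ (m : WithBot ℕ) + p.degree := by
        exact add_le_add (degree_C_mul_X_pow_le m c) le_rfl
    _ < (m : WithBot ℕ) + (n : WithBot ℕ) := by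
        exact WithBot.add_lt_add_left (by exact_mod_cast WithBot.coe_ne_bot) hp
    _ ≤ (N : WithBot ℕ) := by exact_mod_cast Nat.cast_le.mpr h

lemma deg_mono {c : ℝ} {m N : ℕ} (h : m < N) : (C c * X ^ m).degree < (N : WithBot ℕ) := by
  have := deg_term (c := c) (m := m) (n := 1) (N := N) (p := 1)
    (by simpa using (by exact_mod_cast Nat.zero_lt_one : (0 : WithBot ℕ) < (1:ℕ))) (by omega)
  simpa using this

lemma deg_add {p q : ℝ[X]} {N : ℕ} (hp : p.degree < (N : WithBot ℕ)) (hq : q.degree < (N : WithBot ℕ)) :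
    (p + q).degree < (N : WithBot ℕ) :=
  lt_of_le_of_lt (degree_add_le _ _) (max_lt hp hq)

lemma deg_wk {p : ℝ[X]} {n N : ℕ} (hp : p.degree < (n : WithBot ℕ)) (h : n ≤ N) :
    p.degree < (N : WithBot ℕ) := lt_of_lt_of_le hp (by exact_mod_cast Nat.cast_le.mpr h)

lemma eggStruct (α β : ℕ → ℝ) (i : ℕ) (hi : 1 ≤ i) (j : ℕ) (hij : i ≤ j)
    (hα : ∀ l, i ≤ l → l ≤ j → α l ≠ 0) (hβ : ∀ l, i ≤ l → l ≤ j → β l ≠ 0) :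
    ∃ p q s t : ℝ[X],
      p.degree < ((2 * (j - i) + 2 : ℕ) : WithBot ℕ) ∧
      q.degree < ((2 * (j - i) + 1 : ℕ) : WithBot ℕ) ∧
      s.degree < ((2 * (j - i) + 1 : ℕ) : WithBot ℕ) ∧
      t.degree < ((2 * (j - i) : ℕ) : WithBot ℕ) ∧
      ∀ k : ℕ,
        eggProd α β k i j 0 0 =
          (k : ℝ) ^ (2 * (j - i) + 2) * (∏ l ∈ Finset.Icc i j, α l * β l) + p.eval (k:ℝ) ∧
        eggProd α β k i j 0 1 =
          (k : ℝ) ^ (2 * (j - i) + 1) * ((∏ l ∈ Finset.Icc i j, α l * β l) / α i) + q.eval (k:ℝ) ∧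
        eggProd α β k i j 1 0 =
          (k : ℝ) ^ (2 * (j - i) + 1) * ((∏ l ∈ Finset.Icc i j, α l * β l) / β j) + s.eval (k:ℝ) ∧
        eggProd α β k i j 1 1 =
          (k : ℝ) ^ (2 * (j - i)) * ((∏ l ∈ Finset.Icc i j, α l * β l) / (α i * β j)) + t.eval (k:ℝ) := by
  induction j, hij using Nat.le_induction with
  | base =>
    have hai : α i ≠ 0 := hα i le_rfl le_rfl
    have hbi : β i ≠ 0 := hβ i le_rfl le_rfl
    obtain ⟨m, rfl⟩ : ∃ m, i = m + 1 := ⟨i - 1, by omega⟩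
    refine ⟨1, 0, 0, 0, ?_, ?_, ?_, ?_, ?_⟩
    · rw [Polynomial.degree_one]
      have h0 : (0:ℕ) < 2 * (m + 1 - (m + 1)) + 2 := by omega
      exact_mod_cast h0
    · rw [Polynomial.degree_zero]
      exact lt_of_lt_of_le (WithBot.bot_lt_coe 0) (by exact_mod_cast Nat.zero_le _)
    · rw [Polynomial.degree_zero]
      exact lt_of_lt_of_le (WithBot.bot_lt_coe 0) (by exact_mod_cast Nat.zero_le _)
    · rw [Polynomial.degree_zero]
      exact lt_of_lt_of_le (WithBot.bot_lt_coe 0) (by exact_mod_cast Nat.zero_le _)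
    · intro k
      have h1 : eggProd α β k (m + 1) (m + 1) = eggA α β k (m + 1) := by
        rw [eggProd_succ α β k (m+1) m le_rfl, eggProd_of_lt α β k (m+1) m (by omega),
          mul_one]
      rw [h1]
      simp only [Nat.sub_self, Finset.Icc_self, Finset.prod_singleton, eggA]
      simp only [Matrix.cons_val', Matrix.cons_val_zero, Matrix.cons_val_one, Matrix.head_cons,
        Matrix.empty_val', Matrix.cons_val_fin_one, Matrix.head_fin_const, Matrix.of_apply,
        Polynomial.eval_one, Polynomial.eval_zero, pow_zero, pow_one]
      refine ⟨by ring, by field_simp; ring, by field_simp; ring, by field_simp; ring⟩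
  | succ j hij IH =>
    have hij1 : i ≤ j + 1 := by omega
    have hα' : ∀ l, i ≤ l → l ≤ j → α l ≠ 0 := fun l h1 h2 => hα l h1 (by omega)
    have hβ' : ∀ l, i ≤ l → l ≤ j → β l ≠ 0 := fun l h1 h2 => hβ l h1 (by omega)
    obtain ⟨p, q, s, t, hp, hq, hs, ht, hev⟩ := IH hα' hβ'
    have hai : α i ≠ 0 := hα i le_rfl (by omega)
    have hbj : β j ≠ 0 := hβ j (by omega) (by omega)
    have ha' : α (j+1) ≠ 0 := hα (j+1) (by omega) le_rfl
    have hb' : β (j+1) ≠ 0 := hβ (j+1) (by omega) le_rfl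
    set nn := j - i with hnn
    have e1 : 2 * (j + 1 - i) + 2 = 2 * nn + 4 := by omega
    have e2 : 2 * (j + 1 - i) + 1 = 2 * nn + 3 := by omega
    have e3 : 2 * (j + 1 - i) = 2 * nn + 2 := by omega
    rw [e1, e2, e3]
    set γ := ∏ l ∈ Finset.Icc i j, α l * β l with hγ
    have hprod : ∏ l ∈ Finset.Icc i (j+1), α l * β l = γ * (α (j+1) * β (j+1)) := by
      rw [Finset.prod_Icc_succ_top hij1]
    refine ⟨C (α (j+1) * β (j+1)) * X^2 * p + C γ * X^(2*nn+2) + C 1 * X^0 * p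
        + C (β (j+1) * (γ / β j)) * X^(2*nn+2) + C (β (j+1)) * X^1 * s,
      C (α (j+1) * β (j+1)) * X^2 * q + C (γ/α i) * X^(2*nn+1) + C 1 * X^0 * q
        + C (β (j+1) * (γ/(α i * β j))) * X^(2*nn+1) + C (β (j+1)) * X^1 * t,
      C (α (j+1)) * X^1 * p + C (γ/β j) * X^(2*nn+1) + C 1 * X^0 * s,
      C (α (j+1)) * X^1 * q + C (γ/(α i * β j)) * X^(2*nn) + C 1 * X^0 * t,
      ?_, ?_, ?_, ?_, ?_⟩
    · exact deg_add (deg_add (deg_add (deg_add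
        (deg_term hp (by omega)) (deg_mono (by omega)))
        (deg_term hp (by omega))) (deg_mono (by omega))) (deg_term hs (by omega))
    · exact deg_add (deg_add (deg_add (deg_add
        (deg_term hq (by omega)) (deg_mono (by omega)))
        (deg_term hq (by omega))) (deg_mono (by omega))) (deg_term ht (by omega))
    · exact deg_add (deg_add (deg_term hp (by omega)) (deg_mono (by omega)))
        (deg_term hs (by omega))
    · exact deg_add (deg_add (deg_term hq (by omega)) (deg_mono (by omega)))
        (deg_term ht (by omega))
    · intro k
      obtain ⟨f1, f2, f3, f4⟩ := hev k
      have hA : eggProd α β k i (j+1) = eggA α β k (j+1) * eggProd α β k i j :=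
        eggProd_succ α β k i j hij1
      rw [hA, hprod]
      simp only [eggA, Matrix.mul_apply, Fin.sum_univ_two, Matrix.cons_val', Matrix.cons_val_zero,
        Matrix.cons_val_one, Matrix.head_cons, Matrix.empty_val', Matrix.cons_val_fin_one,
        Matrix.head_fin_const, Matrix.of_apply]
      rw [f1, f2, f3, f4]
      simp only [eval_add, eval_mul, eval_pow, eval_C, eval_X, eval_one, pow_zero, pow_one]
      refine ⟨by ring, by ring, ?_, ?_⟩
      · field_simp
        ring
      · field_simp
        ring
open Filter

lemma asymp (c : ℝ) (hc : c ≠ 0) (e : ℕ) (he : 1 ≤ e) (p : ℝ[X])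
    (hp : p.degree < (e : ℕ)) (f : ℕ → ℝ)
    (hf : ∀ k : ℕ, f k = (k : ℝ) ^ e * c + p.eval (k : ℝ)) :
    ∃ C > (0:ℝ), ∃ k₀ : ℕ, ∀ k : ℕ, k₀ ≤ k →
      |f k - (k : ℝ) ^ e * c| ≤ C / k * |(k : ℝ) ^ e * c| := by
  have hdeg : p.degree ≤ ((e - 1 : ℕ) : WithBot ℕ) := by
    rcases hd : p.degree with _ | d
    · exact bot_le
    · rw [hd] at hp
      rw [WithBot.some_eq_coe, ← Nat.cast_withBot] at hp ⊢
      have hde : d < e := by exact_mod_cast hp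
      exact_mod_cast Nat.le_sub_one_of_lt hde
  have hO : (fun x : ℝ => p.eval x) =O[atTop] fun x : ℝ => x ^ (e - 1) := by
    have := Polynomial.isBigO_of_degree_le (𝕜 := ℝ) (P := p) (Q := X ^ (e - 1))
      (by rwa [degree_X_pow])
    simpa using this
  obtain ⟨M, hM⟩ := hO.bound
  rw [Filter.eventually_atTop] at hM
  obtain ⟨x₀, hx₀⟩ := hM
  refine ⟨max (M / |c|) 1, lt_of_lt_of_le one_pos (le_max_right _ _),
    max ⌈x₀⌉₊ 1, fun k hk => ?_⟩
  have hk1 : (1 : ℕ) ≤ k := le_trans (le_max_right _ _) hk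
  have hkr : (1 : ℝ) ≤ (k : ℝ) := by exact_mod_cast hk1
  have hkx : x₀ ≤ (k : ℝ) := le_trans (Nat.ceil_le.mp (le_trans (le_max_left _ _) hk)) le_rfl
  have hb := hx₀ (k : ℝ) hkx
  rw [hf k]
  have h1 : |(k:ℝ) ^ e * c + p.eval (k : ℝ) - (k:ℝ) ^ e * c| = |p.eval (k : ℝ)| := by ring_nf
  rw [h1]
  have hkpos : (0:ℝ) < k := lt_of_lt_of_le one_pos hkr
  have hce : |(k:ℝ) ^ e * c| = (k:ℝ) ^ e * |c| := by
    rw [abs_mul, abs_pow, abs_of_pos hkpos]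
  rw [hce]
  have hpow : (k:ℝ) ^ e = (k:ℝ) ^ (e - 1) * (k:ℝ) := by
    rw [← pow_succ]; congr 1; omega
  have hbb : |p.eval (k:ℝ)| ≤ M * (k:ℝ) ^ (e - 1) := by
    have := hb
    rw [Real.norm_eq_abs, Real.norm_eq_abs, abs_pow, abs_of_pos hkpos] at this
    exact this
  have hcpos : (0:ℝ) < |c| := abs_pos.mpr hc
  calc |p.eval (k:ℝ)| ≤ M * (k:ℝ) ^ (e - 1) := hbb
    _ ≤ (max (M / |c|) 1 * |c|) * (k:ℝ) ^ (e - 1) := by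
        apply mul_le_mul_of_nonneg_right _ (by positivity)
        calc M = M / |c| * |c| := by field_simp
          _ ≤ max (M / |c|) 1 * |c| :=
              mul_le_mul_of_nonneg_right (le_max_left _ _) hcpos.le
    _ = max (M / |c|) 1 / (k:ℝ) * ((k:ℝ) ^ e * |c|) := by
        rw [hpow]; field_simp


/-- Asymptotics of the products of shear matrices: for `1 ≤ i < j ≤ r`, with
`γ_{i,j} = ∏_{l=i}^{j} α_l β_l`, each entry of `Ā_{i,j}(k)` equals its leading term
(`k^{2(j-i+1)}γ_{i,j}`, `k^{2(j-i)+1}γ_{i,j}/α_i`, `k^{2(j-i)+1}γ_{i,j}/β_j`,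
`k^{2(j-i)}γ_{i,j}/(α_iβ_j)` respectively) up to a factor `1 + O(1/k)` as `k → ∞`. -/
theorem stmt7 (r : ℕ) (hr : 1 ≤ r) (α β : ℕ → ℝ)
    (hα : ∀ l, 1 ≤ l → l ≤ r → α l ≠ 0) (hβ : ∀ l, 1 ≤ l → l ≤ r → β l ≠ 0)
    (i j : ℕ) (hi : 1 ≤ i) (hij : i < j) (hj : j ≤ r) :
    ∃ C > (0 : ℝ), ∃ k₀ : ℕ, ∀ k : ℕ, k₀ ≤ k →
      (|eggProd α β k i j 0 0 -
          (k : ℝ) ^ (2 * (j - i + 1)) * (∏ l ∈ Finset.Icc i j, α l * β l)| ≤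
        C / (k : ℝ) *
          |(k : ℝ) ^ (2 * (j - i + 1)) * (∏ l ∈ Finset.Icc i j, α l * β l)|) ∧
      (|eggProd α β k i j 0 1 -
          (k : ℝ) ^ (2 * (j - i) + 1) * ((∏ l ∈ Finset.Icc i j, α l * β l) / α i)| ≤
        C / (k : ℝ) *
          |(k : ℝ) ^ (2 * (j - i) + 1) * ((∏ l ∈ Finset.Icc i j, α l * β l) / α i)|) ∧
      (|eggProd α β k i j 1 0 -
          (k : ℝ) ^ (2 * (j - i) + 1) * ((∏ l ∈ Finset.Icc i j, α l * β l) / β j)| ≤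
        C / (k : ℝ) *
          |(k : ℝ) ^ (2 * (j - i) + 1) * ((∏ l ∈ Finset.Icc i j, α l * β l) / β j)|) ∧
      (|eggProd α β k i j 1 1 -
          (k : ℝ) ^ (2 * (j - i)) * ((∏ l ∈ Finset.Icc i j, α l * β l) / (α i * β j))| ≤
        C / (k : ℝ) *
          |(k : ℝ) ^ (2 * (j - i)) * ((∏ l ∈ Finset.Icc i j, α l * β l) / (α i * β j))|) := by
  obtain ⟨p, q, s, t, hp, hq, hs, ht, hev⟩ :=
    eggStruct α β i hi j (le_of_lt hij)
      (fun l h1 h2 => hα l (by omega) (by omega))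
      (fun l h1 h2 => hβ l (by omega) (by omega))
  set γ := ∏ l ∈ Finset.Icc i j, α l * β l with hγdef
  have hγ : γ ≠ 0 := by
    rw [hγdef]
    exact Finset.prod_ne_zero_iff.mpr fun l hl => by
      rw [Finset.mem_Icc] at hl
      exact mul_ne_zero (hα l (by omega) (by omega)) (hβ l (by omega) (by omega))
  have hai : α i ≠ 0 := hα i (by omega) (by omega)
  have hbj : β j ≠ 0 := hβ j (by omega) (by omega)
  have he : 2 * (j - i + 1) = 2 * (j - i) + 2 := by omega
  obtain ⟨C₁, hC₁, k₁, h1⟩ := asymp γ hγ (2 * (j - i) + 2) (by omega) p hp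
    (fun k => eggProd α β k i j 0 0) (fun k => (hev k).1)
  obtain ⟨C₂, hC₂, k₂, h2⟩ := asymp (γ / α i) (div_ne_zero hγ hai) (2 * (j - i) + 1)
    (by omega) q hq (fun k => eggProd α β k i j 0 1) (fun k => (hev k).2.1)
  obtain ⟨C₃, hC₃, k₃, h3⟩ := asymp (γ / β j) (div_ne_zero hγ hbj) (2 * (j - i) + 1)
    (by omega) s hs (fun k => eggProd α β k i j 1 0) (fun k => (hev k).2.2.1)
  obtain ⟨C₄, hC₄, k₄, h4⟩ := asymp (γ / (α i * β j)) (div_ne_zero hγ (mul_ne_zero hai hbj))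
    (2 * (j - i)) (by omega) t ht (fun k => eggProd α β k i j 1 1)
    (fun k => (hev k).2.2.2)
  refine ⟨max (max C₁ C₂) (max C₃ C₄),
    lt_of_lt_of_le hC₁ ((le_max_left _ _).trans (le_max_left _ _)),
    max (max k₁ k₂) (max k₃ k₄) + 1, fun k hk => ?_⟩
  have hkpos : (0:ℝ) < (k:ℝ) := by
    have : 1 ≤ k := by omega
    exact_mod_cast this
  have key : ∀ (C' : ℝ), C' ≤ max (max C₁ C₂) (max C₃ C₄) → ∀ Y X : ℝ,
      Y ≤ C' / k * |X| → Y ≤ max (max C₁ C₂) (max C₃ C₄) / k * |X| := by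
    intro C' hC' Y X h
    refine le_trans h ?_
    gcongr
  rw [he]
  exact ⟨key C₁ ((le_max_left _ _).trans (le_max_left _ _)) _ _ (h1 k (by omega)),
    key C₂ ((le_max_right _ _).trans (le_max_left _ _)) _ _ (h2 k (by omega)),
    key C₃ ((le_max_left _ _).trans (le_max_right _ _)) _ _ (h3 k (by omega)),
    key C₄ ((le_max_right _ _).trans (le_max_right _ _)) _ _ (h4 k (by omega))⟩
end

section
/- Fix r ≥ 1 and nonzero real numbers α_1,...,α_r, β_1,...,β_r. For k ∈ ℕ define A_j(k) = [[1+k²α_jβ_j, kβ_j],[kα_j, 1]], Ā(k) = A_r(k)···A_1(k), and γ = ∏_{l=1}^{r} α_lβ_l. Then det(Ā(k) − I) = −k^{2r}γ·(1+O(1/k)) as k → ∞; in particular there exists k₀ such that Ā(k) − I is invertible for all k ≥ k₀. -/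
set_option maxHeartbeats 4000000

lemma eggA_det (α β : ℕ → ℝ) (k j : ℕ) : (eggA α β k j).det = 1 := by
  simp [eggA, Matrix.det_fin_two_of]; ring

lemma eggProd_det (α β : ℕ → ℝ) (k i r : ℕ) : (eggProd α β k i r).det = 1 := by
  induction r with
  | zero => simp [eggProd]
  | succ s ih =>
    have : eggProd α β k i (s+1)
        = (if i ≤ s + 1 then eggA α β k (s + 1) else 1) * eggProd α β k i s := rfl
    rw [this, Matrix.det_mul, ih]
    split <;> simp [eggA_det]

lemma egg_det_sub (α β : ℕ → ℝ) (k r : ℕ) :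
    (eggProd α β k 1 r - 1).det
      = 2 - (eggProd α β k 1 r) 0 0 - (eggProd α β k 1 r) 1 1 := by
  have h1 := eggProd_det α β k 1 r
  rw [Matrix.det_fin_two] at h1 ⊢
  simp only [Matrix.sub_apply, Matrix.one_apply_eq,
    Matrix.one_apply_ne (by decide : (0:Fin 2) ≠ 1),
    Matrix.one_apply_ne (by decide : (1:Fin 2) ≠ 0)]
  linear_combination h1


lemma egg_inv (α β : ℕ → ℝ) (r : ℕ) :
    ∃ C : ℝ, 0 < C ∧ ∀ k : ℕ, 1 ≤ k →
      (k:ℝ) * |(eggProd α β k 1 r) 0 0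
          - (∏ l ∈ Finset.Icc 1 r, α l * β l) * (k:ℝ)^(2*r)| ≤ C * (k:ℝ)^(2*r) ∧
      (k:ℝ) * |(eggProd α β k 1 r) 0 1| ≤ C * (k:ℝ)^(2*r) ∧
      (k:ℝ) * |(eggProd α β k 1 r) 1 0| ≤ C * (k:ℝ)^(2*r) ∧
      |(eggProd α β k 1 r) 1 1| ≤ C * (k:ℝ)^(2*r) ∧
      (1 ≤ r → (k:ℝ)^2 * |(eggProd α β k 1 r) 1 1| ≤ C * (k:ℝ)^(2*r)) := by
  induction r with
  | zero =>
    refine ⟨1, one_pos, fun k hk => ?_⟩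
    simp [eggProd, Matrix.one_apply]
  | succ s ih =>
    obtain ⟨C, hC, h⟩ := ih
    set γ := ∏ l ∈ Finset.Icc 1 s, α l * β l with hγdef
    set A := α (s+1) with hAdef
    set B := β (s+1) with hBdef
    refine ⟨(|γ| + C + 1) * (1 + |A|) * (1 + |B|) * 4, by positivity, fun k hk => ?_⟩
    obtain ⟨h1, h2, h3, h4, _⟩ := h k hk
    set K := (k:ℝ)^(2*s) with hKdef
    have hk1 : (1:ℝ) ≤ (k:ℝ) := by exact_mod_cast hk
    have hk0 : (0:ℝ) < (k:ℝ) := by linarith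
    have hK0 : (0:ℝ) < K := by positivity
    have hK1 : (1:ℝ) ≤ K := one_le_pow₀ hk1
    have hkk2 : (k:ℝ) ≤ (k:ℝ)^2 := by nlinarith
    have hk21 : (1:ℝ) ≤ (k:ℝ)^2 := by nlinarith
    have hexp : (k:ℝ)^(2*(s+1)) = (k:ℝ)^2 * K := by
      rw [hKdef, ← pow_add]; ring_nf
    have hprod : ∏ l ∈ Finset.Icc 1 (s+1), α l * β l = γ * (A * B) := by
      rw [Finset.prod_Icc_succ_top (by omega : 1 ≤ s + 1)]
    have hM : eggProd α β k 1 (s+1) = eggA α β k (s+1) * eggProd α β k 1 s := by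
      show (if 1 ≤ s + 1 then eggA α β k (s + 1) else 1) * eggProd α β k 1 s = _
      rw [if_pos (by omega)]
    set M := eggProd α β k 1 s with hMdef
    set a := M 0 0; set b := M 0 1; set c := M 1 0; set d := M 1 1
    have e00 : (eggProd α β k 1 (s+1)) 0 0 = (1 + (k:ℝ)^2 * A * B) * a + ((k:ℝ) * B) * c := by
      rw [hM]; simp [eggA, Matrix.mul_apply, Fin.sum_univ_two]; rfl
    have e01 : (eggProd α β k 1 (s+1)) 0 1 = (1 + (k:ℝ)^2 * A * B) * b + ((k:ℝ) * B) * d := by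
      rw [hM]; simp [eggA, Matrix.mul_apply, Fin.sum_univ_two]; rfl
    have e10 : (eggProd α β k 1 (s+1)) 1 0 = ((k:ℝ) * A) * a + c := by
      rw [hM]; simp [eggA, Matrix.mul_apply, Fin.sum_univ_two]; rfl
    have e11 : (eggProd α β k 1 (s+1)) 1 1 = ((k:ℝ) * A) * b + d := by
      rw [hM]; simp [eggA, Matrix.mul_apply, Fin.sum_univ_two]; rfl
    have q1 : |a - γ * K| ≤ C * K :=
      le_trans (le_mul_of_one_le_left (abs_nonneg _) hk1) h1
    have q2 : |b| ≤ C * K := le_trans (le_mul_of_one_le_left (abs_nonneg _) hk1) h2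
    have q3 : |c| ≤ C * K := le_trans (le_mul_of_one_le_left (abs_nonneg _) hk1) h3
    have qa : |a| ≤ (|γ| + C) * K := by
      have : |a| ≤ |a - γ * K| + |γ * K| := by
        have := abs_add_le (a - γ * K) (γ * K); simpa using this
      have h2' : |γ * K| = |γ| * K := by
        rw [abs_mul, abs_of_nonneg hK0.le]
      linarith [q1, h2'.le, h2'.ge, this]
    have hA0 : (0:ℝ) ≤ |A| := abs_nonneg _
    have hB0 : (0:ℝ) ≤ |B| := abs_nonneg _
    have hγ0 : (0:ℝ) ≤ |γ| := abs_nonneg _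
    have habsk : |(k:ℝ)| = (k:ℝ) := abs_of_nonneg hk0.le
    have habsk2 : |(k:ℝ)^2| = (k:ℝ)^2 := abs_of_nonneg (sq_nonneg _)
    refine ⟨?_, ?_, ?_, ?_, fun _ => ?_⟩
    · rw [e00, hprod, hexp]
      have hid : (1 + (k:ℝ)^2 * A * B) * a + ((k:ℝ) * B) * c - γ * (A * B) * ((k:ℝ)^2 * K)
          = a + ((k:ℝ)^2 * A * B) * (a - γ * K) + ((k:ℝ) * B) * c := by ring
      rw [hid]
      have t2 : |((k:ℝ)^2 * A * B) * (a - γ * K)| = (k:ℝ)^2 * |A| * |B| * |a - γ * K| := by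
        rw [abs_mul, abs_mul, abs_mul, habsk2]
      have t3 : |((k:ℝ) * B) * c| = (k:ℝ) * |B| * |c| := by
        rw [abs_mul, abs_mul, habsk]
      calc (k:ℝ) * |a + ((k:ℝ)^2 * A * B) * (a - γ * K) + ((k:ℝ) * B) * c|
          ≤ (k:ℝ) * (|a| + (k:ℝ)^2 * |A| * |B| * |a - γ * K| + (k:ℝ) * |B| * |c|) := by
            refine mul_le_mul_of_nonneg_left ?_ hk0.le
            refine le_trans (abs_add_three _ _ _) ?_
            rw [t2, t3]
        _ = (k:ℝ) * |a| + (k:ℝ)^2 * |A| * |B| * ((k:ℝ) * |a - γ * K|)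
              + (k:ℝ) * |B| * ((k:ℝ) * |c|) := by ring
        _ ≤ (k:ℝ) * ((|γ| + C) * K) + (k:ℝ)^2 * |A| * |B| * (C * K)
              + (k:ℝ) * |B| * (C * K) := by gcongr
        _ ≤ (k:ℝ)^2 * ((|γ| + C) * K) + (k:ℝ)^2 * |A| * |B| * (C * K)
              + (k:ℝ)^2 * |B| * (C * K) := by gcongr <;> positivity
        _ = ((|γ| + C) + |A| * |B| * C + |B| * C) * ((k:ℝ)^2 * K) := by ring
        _ ≤ (|γ| + C + 1) * (1 + |A|) * (1 + |B|) * 4 * ((k:ℝ)^2 * K) := by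
            refine mul_le_mul_of_nonneg_right ?_ (by positivity)
            nlinarith [mul_nonneg hA0 hB0, mul_nonneg (mul_nonneg hγ0 hA0) hB0,
              mul_nonneg (mul_nonneg hC.le hA0) hB0, mul_nonneg hC.le hA0,
              mul_nonneg hC.le hB0, mul_nonneg hγ0 hA0, mul_nonneg hγ0 hB0]
    · rw [e01, hexp]
      have hid : (1 + (k:ℝ)^2 * A * B) * b + ((k:ℝ) * B) * d
          = b + ((k:ℝ)^2 * A * B) * b + ((k:ℝ) * B) * d := by ring
      rw [hid]
      have t2 : |((k:ℝ)^2 * A * B) * b| = (k:ℝ)^2 * |A| * |B| * |b| := by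
        rw [abs_mul, abs_mul, abs_mul, habsk2]
      have t3 : |((k:ℝ) * B) * d| = (k:ℝ) * |B| * |d| := by
        rw [abs_mul, abs_mul, habsk]
      calc (k:ℝ) * |b + ((k:ℝ)^2 * A * B) * b + ((k:ℝ) * B) * d|
          ≤ (k:ℝ) * (|b| + (k:ℝ)^2 * |A| * |B| * |b| + (k:ℝ) * |B| * |d|) := by
            refine mul_le_mul_of_nonneg_left ?_ hk0.le
            refine le_trans (abs_add_three _ _ _) ?_
            rw [t2, t3]
        _ = (k:ℝ) * |b| + (k:ℝ)^2 * |A| * |B| * ((k:ℝ) * |b|) + (k:ℝ)^2 * |B| * |d| := by ring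
        _ ≤ C * K + (k:ℝ)^2 * |A| * |B| * (C * K) + (k:ℝ)^2 * |B| * (C * K) := by gcongr
        _ ≤ (k:ℝ)^2 * (C * K) + (k:ℝ)^2 * |A| * |B| * (C * K) + (k:ℝ)^2 * |B| * (C * K) := by
            have : C * K ≤ (k:ℝ)^2 * (C * K) := le_mul_of_one_le_left (by positivity) hk21
            linarith
        _ = (C + |A| * |B| * C + |B| * C) * ((k:ℝ)^2 * K) := by ring
        _ ≤ (|γ| + C + 1) * (1 + |A|) * (1 + |B|) * 4 * ((k:ℝ)^2 * K) := by
            refine mul_le_mul_of_nonneg_right ?_ (by positivity)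
            nlinarith [mul_nonneg hA0 hB0, mul_nonneg (mul_nonneg hC.le hA0) hB0,
              mul_nonneg hC.le hA0, mul_nonneg hC.le hB0, mul_nonneg hγ0 hA0,
              mul_nonneg hγ0 hB0, mul_nonneg (mul_nonneg hγ0 hA0) hB0]
    · rw [e10, hexp]
      have t1 : |((k:ℝ) * A) * a| = (k:ℝ) * |A| * |a| := by
        rw [abs_mul, abs_mul, habsk]
      calc (k:ℝ) * |((k:ℝ) * A) * a + c|
          ≤ (k:ℝ) * ((k:ℝ) * |A| * |a| + |c|) := by
            refine mul_le_mul_of_nonneg_left ?_ hk0.le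
            refine le_trans (abs_add_le _ _) ?_
            rw [t1]
        _ = (k:ℝ)^2 * |A| * |a| + (k:ℝ) * |c| := by ring
        _ ≤ (k:ℝ)^2 * |A| * ((|γ| + C) * K) + C * K := by gcongr
        _ ≤ (k:ℝ)^2 * |A| * ((|γ| + C) * K) + (k:ℝ)^2 * (C * K) := by
            have : C * K ≤ (k:ℝ)^2 * (C * K) := le_mul_of_one_le_left (by positivity) hk21
            linarith
        _ = (|A| * (|γ| + C) + C) * ((k:ℝ)^2 * K) := by ring
        _ ≤ (|γ| + C + 1) * (1 + |A|) * (1 + |B|) * 4 * ((k:ℝ)^2 * K) := by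
            refine mul_le_mul_of_nonneg_right ?_ (by positivity)
            nlinarith [mul_nonneg hA0 hB0, mul_nonneg hγ0 hA0, mul_nonneg hC.le hA0,
              mul_nonneg hγ0 hB0, mul_nonneg hC.le hB0,
              mul_nonneg (mul_nonneg hγ0 hA0) hB0, mul_nonneg (mul_nonneg hC.le hA0) hB0]
    · rw [e11, hexp]
      have t1 : |((k:ℝ) * A) * b| = (k:ℝ) * |A| * |b| := by
        rw [abs_mul, abs_mul, habsk]
      calc |((k:ℝ) * A) * b + d|
          ≤ (k:ℝ) * |A| * |b| + |d| := by
            refine le_trans (abs_add_le _ _) ?_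
            rw [t1]
        _ = |A| * ((k:ℝ) * |b|) + |d| := by ring
        _ ≤ |A| * (C * K) + C * K := by gcongr
        _ ≤ (k:ℝ)^2 * (|A| * (C * K)) + (k:ℝ)^2 * (C * K) := by
            have u1 : |A| * (C * K) ≤ (k:ℝ)^2 * (|A| * (C * K)) :=
              le_mul_of_one_le_left (by positivity) hk21
            have u2 : C * K ≤ (k:ℝ)^2 * (C * K) := le_mul_of_one_le_left (by positivity) hk21
            linarith
        _ = (|A| * C + C) * ((k:ℝ)^2 * K) := by ring
        _ ≤ (|γ| + C + 1) * (1 + |A|) * (1 + |B|) * 4 * ((k:ℝ)^2 * K) := by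
            refine mul_le_mul_of_nonneg_right ?_ (by positivity)
            nlinarith [mul_nonneg hA0 hB0, mul_nonneg hC.le hA0, mul_nonneg hC.le hB0,
              mul_nonneg hγ0 hA0, mul_nonneg hγ0 hB0,
              mul_nonneg (mul_nonneg hγ0 hA0) hB0, mul_nonneg (mul_nonneg hC.le hA0) hB0]
    · rw [e11, hexp]
      have t1 : |((k:ℝ) * A) * b| = (k:ℝ) * |A| * |b| := by
        rw [abs_mul, abs_mul, habsk]
      calc (k:ℝ)^2 * |((k:ℝ) * A) * b + d|
          ≤ (k:ℝ)^2 * ((k:ℝ) * |A| * |b| + |d|) := by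
            refine mul_le_mul_of_nonneg_left ?_ (sq_nonneg _)
            refine le_trans (abs_add_le _ _) ?_
            rw [t1]
        _ = (k:ℝ)^2 * |A| * ((k:ℝ) * |b|) + (k:ℝ)^2 * |d| := by ring
        _ ≤ (k:ℝ)^2 * |A| * (C * K) + (k:ℝ)^2 * (C * K) := by
            have u1 : (k:ℝ)^2 * |A| * ((k:ℝ) * |b|) ≤ (k:ℝ)^2 * |A| * (C * K) :=
              mul_le_mul_of_nonneg_left h2 (by positivity)
            have u2 : (k:ℝ)^2 * |d| ≤ (k:ℝ)^2 * (C * K) :=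
              mul_le_mul_of_nonneg_left h4 (by positivity)
            linarith
        _ = (|A| * C + C) * ((k:ℝ)^2 * K) := by ring
        _ ≤ (|γ| + C + 1) * (1 + |A|) * (1 + |B|) * 4 * ((k:ℝ)^2 * K) := by
            refine mul_le_mul_of_nonneg_right ?_ (by positivity)
            nlinarith [mul_nonneg hA0 hB0, mul_nonneg hC.le hA0, mul_nonneg hC.le hB0,
              mul_nonneg hγ0 hA0, mul_nonneg hγ0 hB0,
              mul_nonneg (mul_nonneg hγ0 hA0) hB0, mul_nonneg (mul_nonneg hC.le hA0) hB0]

/-- With `Ā(k) = A_r(k)⋯A_1(k)` and `γ = ∏_{l=1}^{r} α_lβ_l`, one has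
`det(Ā(k) − I) = −k^{2r} γ (1 + O(1/k))` as `k → ∞`; in particular `Ā(k) − I` is
invertible for all sufficiently large `k`. -/
theorem stmt8 (r : ℕ) (hr : 1 ≤ r) (α β : ℕ → ℝ)
    (hα : ∀ l, 1 ≤ l → l ≤ r → α l ≠ 0) (hβ : ∀ l, 1 ≤ l → l ≤ r → β l ≠ 0) :
    (∃ C > (0 : ℝ), ∃ k₀ : ℕ, ∀ k : ℕ, k₀ ≤ k →
      |(eggProd α β k 1 r - 1).det -
          (-((k : ℝ) ^ (2 * r) * (∏ l ∈ Finset.Icc 1 r, α l * β l)))| ≤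
        C / (k : ℝ) *
          |(-((k : ℝ) ^ (2 * r) * (∏ l ∈ Finset.Icc 1 r, α l * β l)))|) ∧
    (∃ k₀ : ℕ, ∀ k : ℕ, k₀ ≤ k → IsUnit (eggProd α β k 1 r - 1)) := by
  obtain ⟨C, hC, h⟩ := egg_inv α β r
  set γ := ∏ l ∈ Finset.Icc 1 r, α l * β l with hγdef
  have hγ : γ ≠ 0 := by
    rw [hγdef]
    refine Finset.prod_ne_zero_iff.2 fun l hl => ?_
    obtain ⟨hl1, hl2⟩ := Finset.mem_Icc.1 hl
    exact mul_ne_zero (hα l hl1 hl2) (hβ l hl1 hl2)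
  have hγa : (0:ℝ) < |γ| := abs_pos.2 hγ
  set C' := (2 + 2 * C) / |γ| with hC'def
  have hC'0 : 0 < C' := by positivity
  have key : ∀ k : ℕ, 1 ≤ k →
      |(eggProd α β k 1 r - 1).det - (-((k:ℝ) ^ (2 * r) * γ))| ≤
        C' / (k:ℝ) * |(-((k:ℝ) ^ (2 * r) * γ))| := by
    intro k hk
    obtain ⟨h1, -, -, -, h5⟩ := h k hk
    have h5' := h5 hr
    have hk1 : (1:ℝ) ≤ (k:ℝ) := by exact_mod_cast hk
    have hk0 : (0:ℝ) < (k:ℝ) := by linarith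
    set K := (k:ℝ) ^ (2 * r) with hKdef
    have hK0 : (0:ℝ) < K := by positivity
    have hkK : (k:ℝ) ≤ K := by
      rw [hKdef]
      exact le_self_pow₀ hk1 (by omega)
    set a := (eggProd α β k 1 r) 0 0
    set d := (eggProd α β k 1 r) 1 1
    have hdet : (eggProd α β k 1 r - 1).det = 2 - a - d := egg_det_sub α β k r
    have hid : (eggProd α β k 1 r - 1).det - (-(K * γ))
        = 2 + (-(a - γ * K)) + (-d) := by rw [hdet]; ring
    have htri : |(eggProd α β k 1 r - 1).det - (-(K * γ))|
        ≤ 2 + |a - γ * K| + |d| := by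
      rw [hid]
      refine le_trans (abs_add_three _ _ _) ?_
      rw [abs_neg, abs_neg]
      norm_num
    have hkd : (k:ℝ) * |d| ≤ C * K := by
      have hkk2 : (k:ℝ) ≤ (k:ℝ)^2 := by nlinarith
      have : (k:ℝ) * |d| ≤ (k:ℝ)^2 * |d| :=
        mul_le_mul_of_nonneg_right hkk2 (abs_nonneg d)
      linarith
    have hmul : (k:ℝ) * |(eggProd α β k 1 r - 1).det - (-(K * γ))| ≤ (2 + 2 * C) * K := by
      have := mul_le_mul_of_nonneg_left htri hk0.le
      have h2k : (k:ℝ) * 2 ≤ 2 * K := by linarith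
      nlinarith [h1, hkd]
    have habs : |(-(K * γ))| = K * |γ| := by
      rw [abs_neg, abs_mul, abs_of_nonneg hK0.le]
    rw [habs]
    have hre : C' / (k:ℝ) * (K * |γ|) = (2 + 2 * C) * K / (k:ℝ) := by
      rw [hC'def]; field_simp
    rw [hre, le_div_iff₀ hk0]
    linarith [hmul]
  refine ⟨⟨C', hC'0, 1, fun k hk => key k hk⟩, ⟨⌈C'⌉₊ + 1, fun k hk => ?_⟩⟩
  have hk1 : 1 ≤ k := by omega
  have hk0 : (0:ℝ) < (k:ℝ) := by exact_mod_cast Nat.pos_of_ne_zero (by omega)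
  have hC'k : C' < (k:ℝ) := by
    calc C' ≤ (⌈C'⌉₊ : ℝ) := Nat.le_ceil _
      _ < (k:ℝ) := by exact_mod_cast Nat.lt_of_lt_of_le (Nat.lt_succ_self _) hk
  have hb := key k hk1
  have hK0 : (0:ℝ) < (k:ℝ) ^ (2 * r) := by positivity
  have habs : |(-((k:ℝ) ^ (2 * r) * γ))| = (k:ℝ) ^ (2 * r) * |γ| := by
    rw [abs_neg, abs_mul, abs_of_nonneg hK0.le]
  have hlt : C' / (k:ℝ) * |(-((k:ℝ) ^ (2 * r) * γ))| < |(-((k:ℝ) ^ (2 * r) * γ))| := by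
    rw [habs]
    have hx : C' / (k:ℝ) < 1 := (div_lt_one hk0).2 hC'k
    have hpos : (0:ℝ) < (k:ℝ) ^ (2 * r) * |γ| := by positivity
    nlinarith
  have hne : (eggProd α β k 1 r - 1).det ≠ 0 := by
    intro h0
    rw [h0, zero_sub, abs_neg] at hb
    exact absurd (lt_of_le_of_lt hb hlt) (lt_irrefl _)
  exact (Matrix.isUnit_iff_isUnit_det _).2 (isUnit_iff_ne_zero.2 hne)
end
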